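/- arXiv:1708.08036 — 3 statements merged into one kernel-verified Lean document; each statement's English description precedes it below -/
import Mathlib

section
/- Fix 1 ≤ j ≤ d, set ν = Σ_{1 ≤ l ≤ d, l ≠ j} 1/(m_{j,l} ω_l), let η be the least common multiple of the numbers m_{j,l} ω_l for l ≠ j, and let e_j be the j-th standard basis vector. Let C₅ be the nonzero real constant in the one-term asymptotic expansion χ̂_D(t k e_j) = C₅ sin(−2π t k + πν/2)(tk)^{−1−ν} + O((tk)^{−1−ν−1/η}) (k a positive integer), and define g(t) = Σ_{k ∈ ℤ, k ≠ 0} C₅ · sin(−2π t |k| + π ν/2) · |k|^{−1−ν}. Then: (i) there is a constant C with | Σ_{k ∈ ℤ, k ≠ 0} χ̂_D(t k e_j) − t^{−1−ν} g(t) | ≤ C · t^{−1−ν−1/η} for all t ≥ 1; (ii) g is periodic with period 1; and (iii) limsup_{t → ∞} |g(t)| > 0. -/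
open MeasureTheory Finset Real Filter Pointwise

noncomputable section

/-- The block of (0-indexed) coordinates `l` with `dp p ≤ l < dp (p+1)`. -/
def block (dd : ℕ) (dp : ℕ → ℕ) (p : ℕ) : Finset (Fin dd) :=
  Finset.univ.filter fun l => dp p ≤ (l : ℕ) ∧ (l : ℕ) < dp (p + 1)

/-- The defining function of the domain `D`. -/
def Ffun (dd nn : ℕ) (dp m : ℕ → ℕ) (ω : Fin dd → ℕ)
    (x : EuclideanSpace ℝ (Fin dd)) : ℝ :=
  ∑ p ∈ Finset.range nn, (∑ l ∈ block dd dp p, x l ^ ω l) ^ m p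

/-- The domain `D`. -/
def Dset (dd nn : ℕ) (dp m : ℕ → ℕ) (ω : Fin dd → ℕ) :
    Set (EuclideanSpace ℝ (Fin dd)) :=
  {x | Ffun dd nn dp m ω x ≤ 1}

/-- The exponents `m_{j,l}`. -/
def mjl (dd : ℕ) (m : ℕ → ℕ) (pIdx : Fin dd → ℕ) (j l : Fin dd) : ℕ :=
  if pIdx j = pIdx l then 1 else m (pIdx l)

/-- The Fourier transform of the indicator function of a set. -/
def ftInd (dd : ℕ) (D : Set (EuclideanSpace ℝ (Fin dd)))
    (ξ : EuclideanSpace ℝ (Fin dd)) : ℂ :=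
  ∫ x in D, Complex.exp (-2 * Real.pi * Complex.I * ((inner ℝ x ξ : ℝ) : ℂ))

/-- The Fourier transform of a (real-valued) function. -/
def ftFun (dd : ℕ) (f : EuclideanSpace ℝ (Fin dd) → ℝ)
    (ξ : EuclideanSpace ℝ (Fin dd)) : ℂ :=
  ∫ x, (f x : ℂ) * Complex.exp (-2 * Real.pi * Complex.I * ((inner ℝ x ξ : ℝ) : ℂ))

/-- The number of lattice points in the dilate `t • D`. -/
def latCount (dd : ℕ) (D : Set (EuclideanSpace ℝ (Fin dd))) (t : ℝ) : ℕ :=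
  Set.ncard {k : Fin dd → ℤ | (WithLp.toLp 2 (fun i => (k i : ℝ)) : EuclideanSpace ℝ (Fin dd)) ∈ t • D}

/-!
Since `χ̂_D(-ξ)` is the complex conjugate of `χ̂_D(ξ)`, the one-term expansion along positive
multiples of `e_j` holds for every nonzero integer `k` with `|k|` in place of `k`. As `ν > 0`, the
error terms `C' (t |k|)^(-1-ν-1/η)` are summable over `k ≠ 0`, and the main terms sum to
`t^(-1-ν) g(t)`. The function `g` is bounded and `1`-periodic, so its `limsup` is positive as soon
as `g ≠ 0`: either `g 0 = 2 C₅ sin(πν/2) ζ(1+ν) ≠ 0`, or `cos(πν/2) = ±1` and `g (1/4)` is a nonzero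
multiple of the alternating series `1 - 3^(-1-ν) + 5^(-1-ν) - ⋯`.
-/

open ComplexConjugate

lemma ftInd_neg (dd : ℕ) (D : Set (EuclideanSpace ℝ (Fin dd))) (ξ : EuclideanSpace ℝ (Fin dd)) :
    ftInd dd D (-ξ) = conj (ftInd dd D ξ) := by
  rw [ftInd, ftInd, ← integral_conj]
  refine integral_congr_ae (Eventually.of_forall fun x => ?_)
  simp only [inner_neg_right, ← Complex.exp_conj, map_mul, map_neg, map_ofNat, Complex.conj_I,
    Complex.conj_ofReal, Complex.ofReal_neg]
  ring_nf

lemma ftInd_single_neg (dd : ℕ) (D : Set (EuclideanSpace ℝ (Fin dd))) (j : Fin dd) (x : ℝ) :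
    ftInd dd D (EuclideanSpace.single j (-x)) = conj (ftInd dd D (EuclideanSpace.single j x)) := by
  rw [EuclideanSpace.single, PiLp.single_neg, ftInd_neg]

lemma norm_sub_ofReal_le_of_natAbs {F : ℝ → ℂ} (hF : ∀ x, F (-x) = conj (F x)) {G E : ℝ → ℝ}
    (h : ∀ n : ℕ, 0 < n → ‖F n - G n‖ ≤ E n) {k : ℤ} (hk : k ≠ 0) :
    ‖F k - G |(k : ℝ)|‖ ≤ E |(k : ℝ)| := by
  obtain ⟨n, hn, rfl | rfl⟩ : ∃ n : ℕ, 0 < n ∧ (k = n ∨ k = -n) :=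
    ⟨k.natAbs, Int.natAbs_pos.mpr hk, Int.natAbs_eq k⟩
  · simpa using h n hn
  · rw [Int.cast_neg, Int.cast_natCast, abs_neg, Nat.abs_cast, hF, ← Complex.conj_ofReal,
      ← map_sub, Complex.norm_conj]
    exact h n hn

lemma norm_tsum_sub_tsum_le {ι E : Type*} [NormedAddCommGroup E] [CompleteSpace E]
    {a b : ι → E} {c : ι → ℝ} (hb : Summable b) (hc : Summable c) (h : ∀ i, ‖a i - b i‖ ≤ c i) :
    ‖∑' i, a i - ∑' i, b i‖ ≤ ∑' i, c i := by
  have ha : Summable a := by simpa using (hc.of_norm_bounded h).add hb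
  rw [← ha.tsum_sub hb]
  exact tsum_of_norm_bounded hc.hasSum h

lemma tsum_int_ne_zero_natAbs {f : ℕ → ℝ} (hf : Summable f) (hf0 : f 0 = 0) :
    ∑' k : {k : ℤ // k ≠ 0}, f (k : ℤ).natAbs = 2 * ∑' n, f n := by
  have hsupp : Function.support (fun k : ℤ => f k.natAbs) ⊆ {k | k ≠ 0} := by
    rintro k hk rfl
    simp [hf0] at hk
  refine (tsum_subtype_eq_of_support_subset hsupp).trans ?_
  rw [Summable.tsum_of_nat_of_neg (by simpa using hf) (by simpa using hf)]
  simp only [Int.natAbs_natCast, Int.natAbs_neg, Int.natAbs_zero, hf0, sub_zero]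
  ring

lemma summable_abs_intCast_rpow_ne_zero {r : ℝ} (hr : r < -1) :
    Summable fun k : {k : ℤ // k ≠ 0} => |((k : ℤ) : ℝ)| ^ r := by
  have h := summable_abs_int_rpow (b := -r) (by linarith)
  rw [neg_neg] at h
  exact h.comp_injective Subtype.val_injective

lemma tsum_abs_intCast_rpow_ne_zero_pos {r : ℝ} (hr : r < -1) :
    0 < ∑' k : {k : ℤ // k ≠ 0}, |((k : ℤ) : ℝ)| ^ r :=
  (summable_abs_intCast_rpow_ne_zero hr).tsum_pos (fun _ => by positivity) ⟨1, one_ne_zero⟩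
    (by norm_num)

lemma tsum_sin_pi_mul_div_two_mul_rpow_pos {r : ℝ} (hr : r < -1) :
    0 < ∑' n : ℕ, sin (π * n / 2) * (n : ℝ) ^ r := by
  set a : ℕ → ℝ := fun i => ((2 * i + 1 : ℕ) : ℝ) ^ r
  have hinj : Function.Injective fun i : ℕ => 2 * i + 1 := fun _ _ h => by simp only at h; omega
  have hodd : ∑' n : ℕ, sin (π * n / 2) * (n : ℝ) ^ r = ∑' i : ℕ, (-1) ^ i * a i := by
    have hsupp : Function.support (fun n : ℕ => sin (π * n / 2) * (n : ℝ) ^ r) ⊆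
        Set.range fun i => 2 * i + 1 := by
      intro n hn
      obtain ⟨i, rfl | rfl⟩ := Nat.even_or_odd' n
      · refine absurd ?_ hn
        dsimp only
        rw [show π * ((2 * i : ℕ) : ℝ) / 2 = i * π by push_cast; ring, sin_nat_mul_pi, zero_mul]
      · exact ⟨i, rfl⟩
    rw [← hinj.tsum_eq hsupp]
    refine tsum_congr fun i => ?_
    rw [show π * ((2 * i + 1 : ℕ) : ℝ) / 2 = i * π + π / 2 by push_cast; ring,
      sin_add_pi_div_two, cos_nat_mul_pi]
  have ha : Summable a := (summable_nat_rpow.mpr hr).comp_injective hinj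
  have hanti : Antitone a := fun i i' hii' =>
    rpow_le_rpow_of_nonpos (by positivity) (by gcongr) (by linarith)
  have hpair := hanti.alternating_series_le_tendsto ha.tendsto_alternating_series_tsum 1
  have h3 : (3 : ℝ) ^ r < 1 := rpow_lt_one_of_one_lt_of_neg (by norm_num) (by linarith)
  rw [hodd]
  norm_num [a, Finset.sum_range_succ] at hpair ⊢
  linarith

theorem Function.Periodic.limsup_abs_pos {g : ℝ → ℝ} {c : ℝ} (hg : Function.Periodic g c)
    (hc : 0 < c) {M : ℝ} (hM : ∀ t, |g t| ≤ M) {t₀ : ℝ} (ht₀ : g t₀ ≠ 0) :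
    0 < limsup (fun t => |g t|) atTop := by
  have hfreq : ∃ᶠ t in atTop, |g t₀| ≤ |g t| := by
    refine frequently_atTop.mpr fun b => ?_
    obtain ⟨n, hn⟩ := exists_nat_ge ((b - t₀) / c)
    refine ⟨t₀ + n * c, ?_, by rw [hg.nat_mul n t₀]⟩
    linarith [(div_le_iff₀ hc).mp hn]
  exact (abs_pos.mpr ht₀).trans_le (le_limsup_of_frequently_le hfreq (isBoundedUnder_of ⟨M, hM⟩))

lemma abs_mul_sin_mul_le (C x : ℝ) {y : ℝ} (hy : 0 ≤ y) : |C * sin x * y| ≤ |C| * y := by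
  rw [abs_mul, abs_mul, abs_of_nonneg hy]
  gcongr
  exact mul_le_of_le_one_right (abs_nonneg C) (abs_sin_le_one x)

def axisTerm (C ν t : ℝ) (k : ℤ) : ℝ :=
  C * sin (-2 * π * t * ((|k| : ℤ) : ℝ) + π * ν / 2) * ((|k| : ℤ) : ℝ) ^ (-1 - ν)

/-- `axisProfile C₅ ν` is the function `g` of the statement. -/
def axisProfile (C ν t : ℝ) : ℝ :=
  ∑' k : {k : ℤ // k ≠ 0}, axisTerm C ν t k

section axisProfile

variable (C : ℝ) {ν : ℝ}

lemma abs_axisTerm_le (ν t : ℝ) (k : ℤ) : |axisTerm C ν t k| ≤ |C| * |(k : ℝ)| ^ (-1 - ν) := by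
  rw [axisTerm, Int.cast_abs]
  exact abs_mul_sin_mul_le C _ (by positivity)

lemma summable_axisTerm (hν : 0 < ν) (t : ℝ) :
    Summable fun k : {k : ℤ // k ≠ 0} => axisTerm C ν t k :=
  ((summable_abs_intCast_rpow_ne_zero (r := -1 - ν) (by linarith)).mul_left |C|).of_norm_bounded
    fun k => abs_axisTerm_le C ν t k

lemma abs_axisProfile_le (hν : 0 < ν) (t : ℝ) :
    |axisProfile C ν t| ≤ |C| * ∑' k : {k : ℤ // k ≠ 0}, |((k : ℤ) : ℝ)| ^ (-1 - ν) := by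
  rw [← tsum_mul_left]
  exact tsum_of_norm_bounded (f := fun k : {k : ℤ // k ≠ 0} => axisTerm C ν t k)
    ((summable_abs_intCast_rpow_ne_zero (r := -1 - ν) (by linarith)).mul_left |C|).hasSum
    fun k => abs_axisTerm_le C ν t k

lemma axisProfile_periodic (ν : ℝ) : Function.Periodic (axisProfile C ν) 1 := fun t =>
  tsum_congr fun k => by
    rw [axisTerm, axisTerm, show -2 * π * (t + 1) * ((|(k : ℤ)| : ℤ) : ℝ) + π * ν / 2 =
        -2 * π * t * ((|(k : ℤ)| : ℤ) : ℝ) + π * ν / 2 + ((-|(k : ℤ)| : ℤ) : ℝ) * (2 * π) by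
      push_cast; ring, sin_add_int_mul_two_pi]

lemma axisProfile_eq_two_mul_tsum_nat (hν : 0 < ν) (t : ℝ) :
    axisProfile C ν t = 2 * ∑' n : ℕ, C * sin (-2 * π * t * n + π * ν / 2) * (n : ℝ) ^ (-1 - ν) := by
  rw [axisProfile, ← tsum_int_ne_zero_natAbs]
  · exact tsum_congr fun k => by rw [axisTerm, Nat.cast_natAbs]
  · exact ((summable_nat_rpow.mpr (by linarith)).mul_left |C|).of_norm_bounded
      fun n => abs_mul_sin_mul_le C _ (by positivity)
  · simp [zero_rpow (by linarith : -1 - ν ≠ 0)]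

lemma axisProfile_zero (hν : 0 < ν) :
    axisProfile C ν 0 = 2 * C * sin (π * ν / 2) * ∑' n : ℕ, (n : ℝ) ^ (-1 - ν) := by
  simp [axisProfile_eq_two_mul_tsum_nat C hν, tsum_mul_left, mul_assoc]

lemma axisProfile_one_fourth (hν : 0 < ν) (hs : sin (π * ν / 2) = 0) :
    axisProfile C ν (1 / 4) =
      -(2 * C * cos (π * ν / 2)) * ∑' n : ℕ, sin (π * n / 2) * (n : ℝ) ^ (-1 - ν) := by
  rw [axisProfile_eq_two_mul_tsum_nat C hν, ← tsum_mul_left, ← tsum_mul_left]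
  refine tsum_congr fun n => ?_
  rw [show -2 * π * (1 / 4) * n + π * ν / 2 = π * ν / 2 - π * n / 2 by ring, sin_sub, hs]
  ring

lemma exists_axisProfile_ne_zero (hC : C ≠ 0) (hν : 0 < ν) : ∃ t, axisProfile C ν t ≠ 0 := by
  by_cases hs : sin (π * ν / 2) = 0
  · have hc : cos (π * ν / 2) ≠ 0 := fun hc => by
      simpa [hs, hc] using sin_sq_add_cos_sq (π * ν / 2)
    refine ⟨1 / 4, ?_⟩
    rw [axisProfile_one_fourth C hν hs]
    exact mul_ne_zero (by simp [hC, hc]) (tsum_sin_pi_mul_div_two_mul_rpow_pos (by linarith)).ne'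
  · refine ⟨0, ?_⟩
    rw [axisProfile_zero C hν]
    exact mul_ne_zero (by simp [hC, hs])
      ((summable_nat_rpow.mpr (by linarith)).tsum_pos (fun _ => by positivity) 1 (by simp)).ne'

end axisProfile

theorem exists_norm_tsum_sub_axisProfile_le {F : ℝ → ℂ} (hF : ∀ x, F (-x) = conj (F x))
    {C ν ε : ℝ} (hν : 0 < ν) (hε : 0 ≤ ε)
    (hexp : ∃ C' > 0, ∀ t : ℝ, 1 ≤ t → ∀ n : ℕ, 0 < n →
      ‖F (t * n) - ((C * sin (-2 * π * (t * n) + π * ν / 2) * (t * n) ^ (-1 - ν) : ℝ) : ℂ)‖ ≤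
        C' * (t * n) ^ (-1 - ν - ε)) :
    ∃ C'' > 0, ∀ t : ℝ, 1 ≤ t →
      ‖(∑' k : {k : ℤ // k ≠ 0}, F (t * (k : ℤ))) - ((t ^ (-1 - ν) * axisProfile C ν t : ℝ) : ℂ)‖ ≤
        C'' * t ^ (-1 - ν - ε) := by
  obtain ⟨C', hC', hexp⟩ := hexp
  have hr : -1 - ν - ε < -1 := by linarith
  refine ⟨C' * ∑' k : {k : ℤ // k ≠ 0}, |((k : ℤ) : ℝ)| ^ (-1 - ν - ε),
    mul_pos hC' (tsum_abs_intCast_rpow_ne_zero_pos hr), fun t ht => ?_⟩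
  have ht₀ : 0 ≤ t := by linarith
  have hpoint : ∀ k : {k : ℤ // k ≠ 0},
      ‖F (t * (k : ℤ)) - ((t ^ (-1 - ν) * axisTerm C ν t k : ℝ) : ℂ)‖ ≤
        C' * t ^ (-1 - ν - ε) * |((k : ℤ) : ℝ)| ^ (-1 - ν - ε) := by
    intro k
    have h := norm_sub_ofReal_le_of_natAbs (F := fun x => F (t * x))
      (G := fun x => C * sin (-2 * π * (t * x) + π * ν / 2) * (t * x) ^ (-1 - ν))
      (E := fun x => C' * (t * x) ^ (-1 - ν - ε)) (fun x => by simp only [mul_neg, hF])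
      (hexp t ht) k.2
    simp only [mul_rpow ht₀ (abs_nonneg _)] at h
    refine (le_of_eq ?_).trans (h.trans_eq (by ring))
    rw [axisTerm, Int.cast_abs]
    ring_nf
  calc _ = ‖(∑' k : {k : ℤ // k ≠ 0}, F (t * (k : ℤ))) -
        ∑' k : {k : ℤ // k ≠ 0}, ((t ^ (-1 - ν) * axisTerm C ν t k : ℝ) : ℂ)‖ := by
        rw [axisProfile, ← tsum_mul_left, Complex.ofReal_tsum]
    _ ≤ ∑' k : {k : ℤ // k ≠ 0}, C' * t ^ (-1 - ν - ε) * |((k : ℤ) : ℝ)| ^ (-1 - ν - ε) :=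
        norm_tsum_sub_tsum_le
          (Complex.summable_ofReal.mpr ((summable_axisTerm C hν t).mul_left _))
          ((summable_abs_intCast_rpow_ne_zero hr).mul_left _) hpoint
    _ = _ := by rw [tsum_mul_left]; ring

lemma sum_one_div_mjl_mul_pos {dd : ℕ} {m : ℕ → ℕ} {ω pIdx : Fin dd → ℕ} (hd : 2 ≤ dd)
    (hm : ∀ i, 0 < m (pIdx i)) (hω : ∀ l, 0 < ω l) (j : Fin dd) :
    0 < ∑ l ∈ univ.erase j, 1 / ((mjl dd m pIdx j l : ℝ) * (ω l : ℝ)) := by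
  have hmjl : ∀ l, 0 < mjl dd m pIdx j l := fun l => by
    unfold mjl
    split_ifs
    exacts [one_pos, hm l]
  refine sum_pos (fun l _ => ?_) ?_
  · have := hmjl l
    have := hω l
    positivity
  · rw [← card_pos, card_erase_of_mem (mem_univ j), card_univ, Fintype.card_fin]
    omega

theorem axis_sum_asymptotics_general
    (dd nn : ℕ) (dp m : ℕ → ℕ) (ω : Fin dd → ℕ) (pIdx : Fin dd → ℕ)
    (hd : 3 ≤ dd) (hm : ∀ p < nn, 1 ≤ m p)
    (hω : ∀ l, Even (ω l) ∧ 0 < ω l)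
    (hp : ∀ i : Fin dd, pIdx i < nn ∧ dp (pIdx i) ≤ (i : ℕ) ∧ (i : ℕ) < dp (pIdx i + 1))
    (j : Fin dd) (C₅ : ℝ) (hC₅ : C₅ ≠ 0)
    (hexp : ∃ C' > 0, ∀ t : ℝ, 1 ≤ t → ∀ k : ℕ, 0 < k →
      ‖(ftInd dd (Dset dd nn dp m ω) (EuclideanSpace.single j (t * k)) -
          ((C₅ * Real.sin (-2 * Real.pi * (t * k) +
                Real.pi * (∑ l ∈ Finset.univ.erase j,
                    1 / ((mjl dd m pIdx j l : ℝ) * (ω l : ℝ))) / 2) *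
              (t * k) ^ (-1 - ∑ l ∈ Finset.univ.erase j,
                  1 / ((mjl dd m pIdx j l : ℝ) * (ω l : ℝ))) : ℝ) : ℂ))‖ ≤
        C' * (t * k) ^ (-1 - (∑ l ∈ Finset.univ.erase j,
              1 / ((mjl dd m pIdx j l : ℝ) * (ω l : ℝ)))
            - 1 / (((Finset.univ.erase j).lcm
                (fun l => mjl dd m pIdx j l * ω l) : ℕ) : ℝ))) :
    let ν : ℝ := ∑ l ∈ Finset.univ.erase j, 1 / ((mjl dd m pIdx j l : ℝ) * (ω l : ℝ))
    let η : ℕ := (Finset.univ.erase j).lcm (fun l => mjl dd m pIdx j l * ω l)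
    let g : ℝ → ℝ := fun t => ∑' k : {k : ℤ // k ≠ 0},
      C₅ * Real.sin (-2 * Real.pi * t * ((|(k : ℤ)| : ℤ) : ℝ) + Real.pi * ν / 2) *
        ((|(k : ℤ)| : ℤ) : ℝ) ^ (-1 - ν)
    (∃ C > 0, ∀ t : ℝ, 1 ≤ t →
        ‖((∑' k : {k : ℤ // k ≠ 0},
              ftInd dd (Dset dd nn dp m ω)
                (EuclideanSpace.single j (t * ((k : ℤ) : ℝ)))) -
            ((t ^ (-1 - ν) * g t : ℝ) : ℂ))‖ ≤ C * t ^ (-1 - ν - 1 / (η : ℝ))) ∧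
      (∀ t : ℝ, g (t + 1) = g t) ∧
      0 < Filter.limsup (fun t : ℝ => |g t|) Filter.atTop := by
  intro ν η g
  have hν : 0 < ν :=
    sum_one_div_mjl_mul_pos (by omega) (fun i => hm _ (hp i).1) (fun l => (hω l).2) j
  obtain ⟨t₀, ht₀⟩ := exists_axisProfile_ne_zero C₅ hC₅ hν
  exact ⟨exists_norm_tsum_sub_axisProfile_le (F := fun x => ftInd dd _ (EuclideanSpace.single j x))
    (ftInd_single_neg dd _ j) hν (by positivity) hexp, axisProfile_periodic C₅ ν,
    (axisProfile_periodic C₅ ν).limsup_abs_pos one_pos (abs_axisProfile_le C₅ hν) ht₀⟩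

theorem axis_sum_asymptotics
    (dd nn : ℕ) (dp m : ℕ → ℕ) (ω : Fin dd → ℕ) (pIdx : Fin dd → ℕ)
    (hd : 3 ≤ dd) (hn : 1 ≤ nn) (hdp0 : dp 0 = 0) (hdpn : dp nn = dd)
    (hmono : ∀ p < nn, dp p < dp (p + 1)) (hm : ∀ p < nn, 1 ≤ m p)
    (hω : ∀ l, Even (ω l) ∧ 0 < ω l)
    (hp : ∀ i : Fin dd, pIdx i < nn ∧ dp (pIdx i) ≤ (i : ℕ) ∧ (i : ℕ) < dp (pIdx i + 1))
    (j : Fin dd) (C₅ : ℝ) (hC₅ : C₅ ≠ 0)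
    (hexp : ∃ C' > 0, ∀ t : ℝ, 1 ≤ t → ∀ k : ℕ, 0 < k →
      ‖(ftInd dd (Dset dd nn dp m ω) (EuclideanSpace.single j (t * k)) -
          ((C₅ * Real.sin (-2 * Real.pi * (t * k) +
                Real.pi * (∑ l ∈ Finset.univ.erase j,
                    1 / ((mjl dd m pIdx j l : ℝ) * (ω l : ℝ))) / 2) *
              (t * k) ^ (-1 - ∑ l ∈ Finset.univ.erase j,
                  1 / ((mjl dd m pIdx j l : ℝ) * (ω l : ℝ))) : ℝ) : ℂ))‖ ≤
        C' * (t * k) ^ (-1 - (∑ l ∈ Finset.univ.erase j,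
              1 / ((mjl dd m pIdx j l : ℝ) * (ω l : ℝ)))
            - 1 / (((Finset.univ.erase j).lcm
                (fun l => mjl dd m pIdx j l * ω l) : ℕ) : ℝ))) :
    let ν : ℝ := ∑ l ∈ Finset.univ.erase j, 1 / ((mjl dd m pIdx j l : ℝ) * (ω l : ℝ))
    let η : ℕ := (Finset.univ.erase j).lcm (fun l => mjl dd m pIdx j l * ω l)
    let g : ℝ → ℝ := fun t => ∑' k : {k : ℤ // k ≠ 0},
      C₅ * Real.sin (-2 * Real.pi * t * ((|(k : ℤ)| : ℤ) : ℝ) + Real.pi * ν / 2) *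
        ((|(k : ℤ)| : ℤ) : ℝ) ^ (-1 - ν)
    (∃ C > 0, ∀ t : ℝ, 1 ≤ t →
        ‖((∑' k : {k : ℤ // k ≠ 0},
              ftInd dd (Dset dd nn dp m ω)
                (EuclideanSpace.single j (t * ((k : ℤ) : ℝ)))) -
            ((t ^ (-1 - ν) * g t : ℝ) : ℂ))‖ ≤ C * t ^ (-1 - ν - 1 / (η : ℝ))) ∧
      (∀ t : ℝ, g (t + 1) = g t) ∧
      0 < Filter.limsup (fun t : ℝ => |g t|) Filter.atTop :=
  axis_sum_asymptotics_general dd nn dp m ω pIdx hd hm hω hp j C₅ hC₅ hexp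
end
end

section
/- For every nonzero ξ ∈ ℝ^d there exists a unique point x ∈ ∂D such that ∇F(x)/|∇F(x)| = ξ/|ξ|, i.e., the outward unit normal to ∂D at x equals ξ/|ξ|. -/
open MeasureTheory Finset Real Filter Pointwise

noncomputable section

/-!
`F` is differentiable and strictly convex: each block term is an increasing convex power of a sum
of even powers, and it is strictly convex in the coordinates of its block. Since `F 0 = 0` and
`D = {F ≤ 1}` is compact, a maximiser `x` of `⟪ξ, ·⟫` on `D` exists; it lies on `∂D` (otherwise
`ξ = 0` by Fermat), and no direction `v` with `⟪∇F x, v⟫ < 0` can increase `⟪ξ, ·⟫`, which forces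
`ξ` to be a nonnegative multiple of `∇F x ≠ 0`. For uniqueness, the strict gradient inequality
gives `⟪∇F x, y - x⟫ < 0 < ⟪∇F y, y - x⟫` for distinct `x, y ∈ ∂D`, so their normals differ.
-/

open scoped InnerProductSpace Topology Gradient

section StrictConvexGradient

variable {E : Type*} [NormedAddCommGroup E] [InnerProductSpace ℝ E] {f : E → ℝ}

lemma StrictConvexOn.comp_add_smul (hf : StrictConvexOn ℝ Set.univ f) (x : E) {v : E}
    (hv : v ≠ 0) : StrictConvexOn ℝ Set.univ (fun t : ℝ => f (x + t • v)) := by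
  refine ⟨convex_univ, fun s _ t _ hst a b ha hb hab => ?_⟩
  have hne : x + s • v ≠ x + t • v := by
    simpa [(smul_left_injective ℝ hv).ne_iff] using hst
  have hcomb : x + (a * s + b * t) • v = a • (x + s • v) + b • (x + t • v) := by
    linear_combination (norm := module) (-hab) • x
  simp only [smul_eq_mul]
  rw [hcomb]
  exact hf.2 (Set.mem_univ _) (Set.mem_univ _) hne ha hb hab

lemma sameRay_of_forall_inner_neg_imp {g ξ : E} (hg : g ≠ 0)
    (h : ∀ v, ⟪g, v⟫_ℝ < 0 → ⟪ξ, v⟫_ℝ ≤ 0) : SameRay ℝ g ξ := by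
  have hgg : 0 < ⟪g, g⟫_ℝ := real_inner_self_pos.2 hg
  have hle : ∀ v, ⟪g, v⟫_ℝ ≤ 0 → ⟪ξ, v⟫_ℝ ≤ 0 := by
    intro v hv
    have hlim : Tendsto (fun ε : ℝ => ⟪ξ, v - ε • g⟫_ℝ) (𝓝[>] 0) (𝓝 ⟪ξ, v⟫_ℝ) := by
      have hc : Continuous fun ε : ℝ => ⟪ξ, v - ε • g⟫_ℝ := by fun_prop
      simpa using hc.continuousWithinAt (s := Set.Ioi 0) (x := 0) |>.tendsto
    refine le_of_tendsto hlim (eventually_nhdsWithin_of_forall fun ε hε => h _ ?_)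
    rw [inner_sub_right, real_inner_smul_right]
    nlinarith [Set.mem_Ioi.1 hε]
  set c := ⟪g, ξ⟫_ℝ / ⟪g, g⟫_ℝ
  have hw : ⟪g, ξ - c • g⟫_ℝ = 0 := by
    rw [inner_sub_right, real_inner_smul_right, div_mul_cancel₀ _ hgg.ne', sub_self]
  have hξw : ⟪ξ, ξ - c • g⟫_ℝ = 0 := by
    refine le_antisymm (hle _ hw.le) ?_
    have := hle (-(ξ - c • g)) (by rw [inner_neg_right, hw, neg_zero])
    rwa [inner_neg_right, neg_nonpos] at this
  have hξ : ξ = c • g := by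
    rw [← sub_eq_zero, ← inner_self_eq_zero (𝕜 := ℝ), inner_sub_left, real_inner_smul_left,
      hξw, hw, mul_zero, sub_zero]
  have hc : 0 ≤ c := by
    have := h (-g) (by rwa [inner_neg_right, neg_neg_iff_pos])
    rw [inner_neg_right, neg_nonpos, real_inner_comm] at this
    exact div_nonneg this hgg.le
  rw [hξ]
  exact SameRay.sameRay_nonneg_smul_right g hc

lemma eq_of_isMaxOn_inner_sublevel (hf : Continuous f) {ξ x : E} {c : ℝ} (hξ : ξ ≠ 0)
    (hx : f x ≤ c) (hmax : IsMaxOn (fun y => ⟪ξ, y⟫_ℝ) {y | f y ≤ c} x) : f x = c := by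
  refine hx.eq_or_lt.resolve_right fun hlt => hξ ?_
  have hnhds : {y | f y ≤ c} ∈ 𝓝 x := Filter.mem_of_superset
    ((isOpen_lt hf continuous_const).mem_nhds hlt) (Set.ofPred_subset_ofPred.2 fun _ => le_of_lt)
  have h0 := (hmax.isLocalMax hnhds).hasFDerivAt_eq_zero (innerSL ℝ ξ).hasFDerivAt
  simpa using congrArg (fun L => L ξ) h0

variable [CompleteSpace E]

lemma HasGradientAt.hasDerivAt_add_smul {g x : E} (hf : HasGradientAt f g x) (v : E) :
    HasDerivAt (fun t : ℝ => f (x + t • v)) ⟪g, v⟫_ℝ 0 := by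
  have hline : HasDerivAt (fun t : ℝ => x + t • v) v 0 := by
    simpa using ((hasDerivAt_id (0 : ℝ)).smul_const v).const_add x
  exact (hasGradientAt_iff_hasFDerivAt.1 hf).comp_hasDerivAt_of_eq 0 hline (by simp)

lemma StrictConvexOn.add_inner_gradient_lt (hf : StrictConvexOn ℝ Set.univ f) {x y : E}
    (hd : DifferentiableAt ℝ f x) (hxy : x ≠ y) : f x + ⟪∇ f x, y - x⟫_ℝ < f y := by
  have h := (hf.comp_add_smul x (sub_ne_zero.2 hxy.symm)).lt_slope_of_hasDerivAt
    (Set.mem_univ 0) (Set.mem_univ 1) one_pos (hd.hasGradientAt.hasDerivAt_add_smul (y - x))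
  rw [slope_def_field] at h
  simp only [zero_smul, add_zero, one_smul, add_sub_cancel, sub_zero, div_one] at h
  linarith

lemma exists_pos_lt_of_inner_gradient_neg {x v : E} (hd : DifferentiableAt ℝ f x)
    (hv : ⟪∇ f x, v⟫_ℝ < 0) : ∃ t : ℝ, 0 < t ∧ f (x + t • v) < f x := by
  have h := (hd.hasGradientAt.hasDerivAt_add_smul v).tendsto_slope_zero_right
  obtain ⟨t, hneg, ht⟩ := ((h.eventually (gt_mem_nhds hv)).and self_mem_nhdsWithin).exists
  simp only [zero_add, zero_smul, add_zero, smul_eq_mul] at hneg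
  exact ⟨t, ht, sub_neg.1 (neg_of_mul_neg_right hneg (inv_nonneg.2 (le_of_lt ht)))⟩

lemma inner_nonpos_of_isMaxOn_sublevel {ξ x v : E}
    (hmax : IsMaxOn (fun y => ⟪ξ, y⟫_ℝ) {y | f y ≤ f x} x) (hd : DifferentiableAt ℝ f x)
    (hv : ⟪∇ f x, v⟫_ℝ < 0) : ⟪ξ, v⟫_ℝ ≤ 0 := by
  obtain ⟨t, ht, hlt⟩ := exists_pos_lt_of_inner_gradient_neg hd hv
  have h : ⟪ξ, x + t • v⟫_ℝ ≤ ⟪ξ, x⟫_ℝ := hmax hlt.le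
  rw [inner_add_right, real_inner_smul_right, add_le_iff_nonpos_right] at h
  exact nonpos_of_mul_nonpos_right h ht

lemma StrictConvexOn.gradient_ne_zero_of_lt (hf : StrictConvexOn ℝ Set.univ f) {x₀ x : E}
    (hd : DifferentiableAt ℝ f x) (hlt : f x₀ < f x) : ∇ f x ≠ 0 := by
  intro h0
  have h := hf.add_inner_gradient_lt hd (y := x₀) (by rintro rfl; exact hlt.false)
  rw [h0, inner_zero_left, add_zero] at h
  exact h.not_gt hlt

lemma StrictConvexOn.eq_of_sameRay_gradient (hf : StrictConvexOn ℝ Set.univ f)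
    (hd : Differentiable ℝ f) {x y : E} (hxy : f x = f y) (hray : SameRay ℝ (∇ f x) (∇ f y)) :
    x = y := by
  by_contra hne
  have hx := hf.add_inner_gradient_lt (hd x) hne
  have hy := hf.add_inner_gradient_lt (hd y) (Ne.symm hne)
  rw [hxy, add_lt_iff_neg_left] at hx
  rw [← hxy, add_lt_iff_neg_left, ← neg_sub, inner_neg_right, neg_neg_iff_pos] at hy
  rcases hray with h0 | h0 | ⟨r₁, r₂, hr₁, hr₂, hr⟩
  · rw [h0, inner_zero_left] at hx; exact hx.false
  · rw [h0, inner_zero_left] at hy; exact hy.false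
  · have h := congrArg (fun g => ⟪g, y - x⟫_ℝ) hr
    simp only [real_inner_smul_left] at h
    nlinarith [mul_pos hr₂ hy, mul_neg_of_pos_of_neg hr₁ hx]

theorem StrictConvexOn.existsUnique_inv_norm_smul_gradient_eq (hf : StrictConvexOn ℝ Set.univ f)
    (hd : Differentiable ℝ f) {x₀ : E} {c : ℝ} (hx₀ : f x₀ < c)
    (hK : IsCompact {x | f x ≤ c}) {ξ : E} (hξ : ξ ≠ 0) :
    ∃! x, f x = c ∧ ‖∇ f x‖⁻¹ • ∇ f x = ‖ξ‖⁻¹ • ξ := by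
  have hgrad : ∀ x, f x = c → ∇ f x ≠ 0 := fun x hx =>
    hf.gradient_ne_zero_of_lt (hd x) (hx ▸ hx₀)
  obtain ⟨x, hxK, hmax⟩ := hK.exists_isMaxOn ⟨x₀, hx₀.le⟩
    (innerSL ℝ ξ).continuous.continuousOn
  have hxc : f x = c := eq_of_isMaxOn_inner_sublevel hd.continuous hξ hxK hmax
  have hray : SameRay ℝ (∇ f x) ξ := sameRay_of_forall_inner_neg_imp (hgrad x hxc)
    fun v hv => inner_nonpos_of_isMaxOn_sublevel (hxc ▸ hmax) (hd x) hv
  have hdir := (sameRay_iff_inv_norm_smul_eq_of_ne (hgrad x hxc) hξ).1 hray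
  refine ⟨x, ⟨hxc, hdir⟩, fun y ⟨hyc, hy⟩ => ?_⟩
  refine hf.eq_of_sameRay_gradient hd (hyc.trans hxc.symm) ?_
  exact (sameRay_iff_inv_norm_smul_eq_of_ne (hgrad y hyc) (hgrad x hxc)).2 (hy.trans hdir.symm)

end StrictConvexGradient

lemma pow_le_add_mul_pow_of_le {s u v a b : ℝ} (m : ℕ) (hs : 0 ≤ s) (hu : 0 ≤ u) (hv : 0 ≤ v)
    (ha : 0 ≤ a) (hb : 0 ≤ b) (hab : a + b = 1) (h : s ≤ a * u + b * v) :
    s ^ m ≤ a * u ^ m + b * v ^ m :=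
  (pow_le_pow_left₀ hs h m).trans (by simpa using (convexOn_pow m).2 hu hv ha hb hab)

lemma pow_lt_add_mul_pow_of_lt {s u v a b : ℝ} {m : ℕ} (hm : m ≠ 0) (hs : 0 ≤ s) (hu : 0 ≤ u)
    (hv : 0 ≤ v) (ha : 0 ≤ a) (hb : 0 ≤ b) (hab : a + b = 1) (h : s < a * u + b * v) :
    s ^ m < a * u ^ m + b * v ^ m :=
  (pow_lt_pow_left₀ h hs hm).trans_le (by simpa using (convexOn_pow m).2 hu hv ha hb hab)

section Ffun

variable {dd nn : ℕ} {dp m : ℕ → ℕ} {ω : Fin dd → ℕ}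

def blockSum (dd : ℕ) (dp : ℕ → ℕ) (ω : Fin dd → ℕ) (p : ℕ) (x : EuclideanSpace ℝ (Fin dd)) :
    ℝ :=
  ∑ l ∈ block dd dp p, x l ^ ω l

lemma Ffun_eq_sum_blockSum_pow (x : EuclideanSpace ℝ (Fin dd)) :
    Ffun dd nn dp m ω x = ∑ p ∈ range nn, blockSum dd dp ω p x ^ m p :=
  rfl

lemma blockSum_nonneg (hω : ∀ l, Even (ω l)) (p : ℕ) (x : EuclideanSpace ℝ (Fin dd)) :
    0 ≤ blockSum dd dp ω p x :=
  sum_nonneg fun l _ => (hω l).pow_nonneg _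

lemma blockSum_smul_add_smul_le (hω : ∀ l, Even (ω l)) (p : ℕ) (x y : EuclideanSpace ℝ (Fin dd))
    {a b : ℝ} (ha : 0 ≤ a) (hb : 0 ≤ b) (hab : a + b = 1) :
    blockSum dd dp ω p (a • x + b • y) ≤ a * blockSum dd dp ω p x + b * blockSum dd dp ω p y := by
  rw [blockSum, blockSum, blockSum, mul_sum, mul_sum, ← sum_add_distrib]
  refine sum_le_sum fun l _ => ?_
  simpa using (hω l).convexOn_pow.2 (Set.mem_univ (x l)) (Set.mem_univ (y l)) ha hb hab

lemma blockSum_smul_add_smul_lt (hω : ∀ l, Even (ω l) ∧ 0 < ω l) {p : ℕ}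
    {x y : EuclideanSpace ℝ (Fin dd)} {l₀ : Fin dd} (hl₀ : l₀ ∈ block dd dp p) (hne : x l₀ ≠ y l₀)
    {a b : ℝ} (ha : 0 < a) (hb : 0 < b) (hab : a + b = 1) :
    blockSum dd dp ω p (a • x + b • y) < a * blockSum dd dp ω p x + b * blockSum dd dp ω p y := by
  rw [blockSum, blockSum, blockSum, mul_sum, mul_sum, ← sum_add_distrib]
  refine sum_lt_sum (fun l _ => ?_) ⟨l₀, hl₀, ?_⟩
  · simpa using (hω l).1.convexOn_pow.2 (Set.mem_univ (x l)) (Set.mem_univ (y l)) ha.le hb.le hab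
  · simpa using ((hω l₀).1.strictConvexOn_pow (hω l₀).2.ne').2 (Set.mem_univ (x l₀))
      (Set.mem_univ (y l₀)) hne ha hb hab

lemma strictConvexOn_Ffun (hm : ∀ p < nn, 1 ≤ m p) (hω : ∀ l, Even (ω l) ∧ 0 < ω l)
    (hcover : ∀ l : Fin dd, ∃ p < nn, l ∈ block dd dp p) :
    StrictConvexOn ℝ Set.univ (Ffun dd nn dp m ω) := by
  refine ⟨convex_univ, fun x _ y _ hxy a b ha hb hab => ?_⟩
  obtain ⟨l₀, hl₀⟩ : ∃ l, x l ≠ y l := by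
    by_contra! h
    exact hxy (PiLp.ext h)
  obtain ⟨p₀, hp₀, hmem⟩ := hcover l₀
  have hE : ∀ l, Even (ω l) := fun l => (hω l).1
  have hS : ∀ p z, 0 ≤ blockSum dd dp ω p z := blockSum_nonneg hE
  simp only [Ffun_eq_sum_blockSum_pow, smul_eq_mul, mul_sum, ← sum_add_distrib]
  refine sum_lt_sum (fun p _ => ?_) ⟨p₀, mem_range.2 hp₀, ?_⟩
  · exact pow_le_add_mul_pow_of_le _ (hS _ _) (hS _ _) (hS _ _) ha.le hb.le hab
      (blockSum_smul_add_smul_le hE p x y ha.le hb.le hab)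
  · exact pow_lt_add_mul_pow_of_lt (Nat.one_le_iff_ne_zero.1 (hm p₀ hp₀)) (hS _ _) (hS _ _)
      (hS _ _) ha.le hb.le hab (blockSum_smul_add_smul_lt hω hmem hl₀ ha hb hab)

lemma differentiable_Ffun : Differentiable ℝ (Ffun dd nn dp m ω) := by
  unfold Ffun
  fun_prop

lemma Ffun_zero (hm : ∀ p < nn, 1 ≤ m p) (hω : ∀ l, 0 < ω l) : Ffun dd nn dp m ω 0 = 0 := by
  refine sum_eq_zero fun p hp => ?_
  have hS : ∑ l ∈ block dd dp p, (0 : EuclideanSpace ℝ (Fin dd)) l ^ ω l = 0 :=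
    sum_eq_zero fun l _ => by simp [(hω l).ne']
  rw [hS, zero_pow (Nat.one_le_iff_ne_zero.1 (hm p (mem_range.1 hp)))]

lemma abs_le_one_of_Ffun_le_one (hm : ∀ p < nn, 1 ≤ m p) (hω : ∀ l, Even (ω l) ∧ 0 < ω l)
    (hcover : ∀ l : Fin dd, ∃ p < nn, l ∈ block dd dp p) {x : EuclideanSpace ℝ (Fin dd)}
    (hx : Ffun dd nn dp m ω x ≤ 1) (l : Fin dd) : |x l| ≤ 1 := by
  obtain ⟨p, hp, hl⟩ := hcover l
  have hE : ∀ l, Even (ω l) := fun l => (hω l).1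
  have hterm : blockSum dd dp ω p x ^ m p ≤ 1 :=
    (single_le_sum (fun q _ => pow_nonneg (blockSum_nonneg hE q x) _) (mem_range.2 hp)).trans hx
  have hblock : blockSum dd dp ω p x ≤ 1 := (pow_le_one_iff_of_nonneg (blockSum_nonneg hE p x)
    (Nat.one_le_iff_ne_zero.1 (hm p hp))).1 hterm
  have hcoord : |x l| ^ ω l ≤ 1 := by
    rw [(hE l).pow_abs]
    exact (single_le_sum (fun i _ => (hE i).pow_nonneg (x i)) hl).trans hblock
  exact (pow_le_one_iff_of_nonneg (abs_nonneg _) (hω l).2.ne').1 hcoord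

lemma isCompact_Ffun_le_one (hm : ∀ p < nn, 1 ≤ m p) (hω : ∀ l, Even (ω l) ∧ 0 < ω l)
    (hcover : ∀ l : Fin dd, ∃ p < nn, l ∈ block dd dp p) :
    IsCompact {x | Ffun dd nn dp m ω x ≤ 1} := by
  have hbox : IsCompact (WithLp.toLp 2 '' Set.univ.pi fun _ : Fin dd => Set.Icc (-1 : ℝ) 1) :=
    (isCompact_univ_pi fun _ => isCompact_Icc).image (PiLp.continuous_toLp 2 _)
  refine hbox.of_isClosed_subset (isClosed_le differentiable_Ffun.continuous continuous_const)
    fun x hx => ⟨x.ofLp, fun l _ => abs_le.1 (abs_le_one_of_Ffun_le_one hm hω hcover hx l), rfl⟩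

end Ffun

theorem gauss_map_bijective_general
    (dd nn : ℕ) (dp m : ℕ → ℕ) (ω : Fin dd → ℕ) (pIdx : Fin dd → ℕ)
    (hm : ∀ p < nn, 1 ≤ m p)
    (hω : ∀ l, Even (ω l) ∧ 0 < ω l)
    (hp : ∀ i : Fin dd, pIdx i < nn ∧ dp (pIdx i) ≤ (i : ℕ) ∧ (i : ℕ) < dp (pIdx i + 1))
    :
    ∀ ξ : EuclideanSpace ℝ (Fin dd), ξ ≠ 0 →
      ∃! x : EuclideanSpace ℝ (Fin dd), Ffun dd nn dp m ω x = 1 ∧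
        ‖gradient (Ffun dd nn dp m ω) x‖⁻¹ • gradient (Ffun dd nn dp m ω) x =
          ‖ξ‖⁻¹ • ξ := by
  have hcover : ∀ l : Fin dd, ∃ p < nn, l ∈ block dd dp p :=
    fun l => ⟨pIdx l, (hp l).1, mem_filter.2 ⟨mem_univ l, (hp l).2⟩⟩
  intro ξ hξ
  exact (strictConvexOn_Ffun hm hω hcover).existsUnique_inv_norm_smul_gradient_eq
    differentiable_Ffun (x₀ := 0) (by rw [Ffun_zero hm fun l => (hω l).2]; exact one_pos)
    (isCompact_Ffun_le_one hm hω hcover) hξ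

theorem gauss_map_bijective
    (dd nn : ℕ) (dp m : ℕ → ℕ) (ω : Fin dd → ℕ) (pIdx : Fin dd → ℕ)
    (hd : 3 ≤ dd) (hn : 1 ≤ nn) (hdp0 : dp 0 = 0) (hdpn : dp nn = dd)
    (hmono : ∀ p < nn, dp p < dp (p + 1)) (hm : ∀ p < nn, 1 ≤ m p)
    (hω : ∀ l, Even (ω l) ∧ 0 < ω l)
    (hp : ∀ i : Fin dd, pIdx i < nn ∧ dp (pIdx i) ≤ (i : ℕ) ∧ (i : ℕ) < dp (pIdx i + 1))
    :
    ∀ ξ : EuclideanSpace ℝ (Fin dd), ξ ≠ 0 →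
      ∃! x : EuclideanSpace ℝ (Fin dd), Ffun dd nn dp m ω x = 1 ∧
        ‖gradient (Ffun dd nn dp m ω) x‖⁻¹ • gradient (Ffun dd nn dp m ω) x =
          ‖ξ‖⁻¹ • ξ :=
  gauss_map_bijective_general dd nn dp m ω pIdx hm hω hp
end
end

section
/- There exist constants 0 < c ≤ C < ∞, depending only on d, n, the d_p, the m_p, and the ω_l, such that c ≤ |∇F(x)| ≤ C for every x ∈ ∂D; in particular ∇F never vanishes on ∂D. -/
open MeasureTheory Finset Real Filter Pointwise

noncomputable section

theorem gradient_comparable_on_boundary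
    (dd nn : ℕ) (dp m : ℕ → ℕ) (ω : Fin dd → ℕ) (pIdx : Fin dd → ℕ)
    (hd : 3 ≤ dd) (hn : 1 ≤ nn) (hdp0 : dp 0 = 0) (hdpn : dp nn = dd)
    (hmono : ∀ p < nn, dp p < dp (p + 1)) (hm : ∀ p < nn, 1 ≤ m p)
    (hω : ∀ l, Even (ω l) ∧ 0 < ω l)
    (hp : ∀ i : Fin dd, pIdx i < nn ∧ dp (pIdx i) ≤ (i : ℕ) ∧ (i : ℕ) < dp (pIdx i + 1))
    :
    ∃ c C : ℝ, 0 < c ∧ c ≤ C ∧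
      ∀ x : EuclideanSpace ℝ (Fin dd), Ffun dd nn dp m ω x = 1 →
        c ≤ ‖gradient (Ffun dd nn dp m ω) x‖ ∧
          ‖gradient (Ffun dd nn dp m ω) x‖ ≤ C := by
  classical
  set F := Ffun dd nn dp m ω with hFdef
  have hsmooth : ContDiff ℝ (⊤ : ℕ∞) F := by
    apply ContDiff.sum; intro p _
    apply ContDiff.pow
    apply ContDiff.sum; intro l _
    exact (EuclideanSpace.proj l : EuclideanSpace ℝ (Fin dd) →L[ℝ] ℝ).contDiff.pow _
  have hdiff : Differentiable ℝ F := hsmooth.differentiable (by simp)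
  -- Key lower bound on the radial derivative
  have key : ∀ x : EuclideanSpace ℝ (Fin dd), F x = 1 →
      (2 : ℝ) ≤ fderiv ℝ F x x := by
    intro x hx
    have h2 : HasDerivAt (fun t : ℝ => F (t • x))
        (∑ p ∈ Finset.range nn, (m p : ℝ) * (∑ l ∈ block dd dp p, (1 * x l) ^ ω l) ^ (m p - 1)
          * (∑ l ∈ block dd dp p, (ω l : ℝ) * (1 * x l) ^ (ω l - 1) * x l)) 1 := by
      have heq : (fun t : ℝ => F (t • x)) =
          fun t => ∑ p ∈ Finset.range nn, (∑ l ∈ block dd dp p, (t * x l) ^ ω l) ^ m p := by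
        funext t
        simp [hFdef, Ffun, PiLp.smul_apply, smul_eq_mul]
      rw [heq]
      apply HasDerivAt.fun_sum
      intro p _
      exact (HasDerivAt.fun_sum fun l _ => ((hasDerivAt_mul_const (x l)).pow (ω l))).pow (m p)
    simp only [one_mul] at h2
    have h1 : HasDerivAt (fun t : ℝ => F (t • x)) (fderiv ℝ F x x) 1 := by
      have hs : HasDerivAt (fun t : ℝ => t • x) x 1 := by
        simpa using (hasDerivAt_id (1 : ℝ)).smul_const x
      have hFd : HasFDerivAt F (fderiv ℝ F x) ((fun t : ℝ => t • x) 1) := by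
        simpa using (hdiff x).hasFDerivAt
      exact hFd.comp_hasDerivAt 1 hs
    rw [h1.unique h2]
    -- now the explicit bound
    have hterm : ∀ p ∈ Finset.range nn,
        2 * (∑ l ∈ block dd dp p, x l ^ ω l) ^ m p ≤
        (m p : ℝ) * (∑ l ∈ block dd dp p, x l ^ ω l) ^ (m p - 1)
          * (∑ l ∈ block dd dp p, (ω l : ℝ) * x l ^ (ω l - 1) * x l) := by
      intro p hpmem
      rw [Finset.mem_range] at hpmem
      set S := ∑ l ∈ block dd dp p, x l ^ ω l with hSdef
      have hS : 0 ≤ S := Finset.sum_nonneg fun l _ => (hω l).1.pow_nonneg _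
      have hT : 2 * S ≤ ∑ l ∈ block dd dp p, (ω l : ℝ) * x l ^ (ω l - 1) * x l := by
        rw [hSdef, Finset.mul_sum]
        apply Finset.sum_le_sum
        intro l _
        have hω2 : (2 : ℝ) ≤ (ω l : ℝ) := by
          have := (hω l).1
          have := (hω l).2
          obtain ⟨r, hr⟩ := (hω l).1
          exact_mod_cast (by omega : 2 ≤ ω l)
        have hpow : x l ^ (ω l - 1) * x l = x l ^ ω l := by
          have := (hω l).2
          rw [← pow_succ]; congr 1; omega
        rw [mul_assoc, hpow]
        exact mul_le_mul_of_nonneg_right hω2 ((hω l).1.pow_nonneg _)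
      set T := ∑ l ∈ block dd dp p, (ω l : ℝ) * x l ^ (ω l - 1) * x l with hTdef
      have hmp := hm p hpmem
      have hSm : S ^ m p = S ^ (m p - 1) * S := by
        rw [← pow_succ]; congr 1; omega
      have hSpow : (0:ℝ) ≤ S ^ (m p - 1) := pow_nonneg hS _
      have hT0 : (0:ℝ) ≤ T := le_trans (by positivity) hT
      have hm1 : (1:ℝ) ≤ (m p : ℝ) := by exact_mod_cast hmp
      rw [hSm]
      nlinarith [mul_le_mul_of_nonneg_left hT hSpow, mul_nonneg hSpow hT0,
        mul_le_mul_of_nonneg_right hm1 (mul_nonneg hSpow hT0)]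
    calc (2:ℝ) = ∑ p ∈ Finset.range nn, 2 * (∑ l ∈ block dd dp p, x l ^ ω l) ^ m p := by
          rw [← Finset.mul_sum]
          have : (∑ p ∈ Finset.range nn, (∑ l ∈ block dd dp p, x l ^ ω l) ^ m p) = F x := rfl
          rw [this, hx, mul_one]
      _ ≤ _ := Finset.sum_le_sum hterm
  -- Boundedness of the boundary
  set K : Set (EuclideanSpace ℝ (Fin dd)) := {x | F x = 1} with hKdef
  have hKclosed : IsClosed K := isClosed_eq hsmooth.continuous continuous_const
  have hKsub : K ⊆ Metric.closedBall 0 (Real.sqrt dd) := by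
    intro x hx
    have hx1 : F x = 1 := hx
    have hcoord : ∀ i : Fin dd, |x i| ≤ 1 := by
      intro i
      have hpi := hp i
      have hiblock : i ∈ block dd dp (pIdx i) := by
        simp [block, hpi.2.1, hpi.2.2]
      have hS : (0:ℝ) ≤ ∑ l ∈ block dd dp (pIdx i), x l ^ ω l :=
        Finset.sum_nonneg fun l _ => (hω l).1.pow_nonneg _
      have hSm1 : (∑ l ∈ block dd dp (pIdx i), x l ^ ω l) ^ m (pIdx i) ≤ 1 := by
        have := Finset.single_le_sum
          (f := fun p => (∑ l ∈ block dd dp p, x l ^ ω l) ^ m p)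
          (fun q _ => pow_nonneg (Finset.sum_nonneg fun l _ => (hω l).1.pow_nonneg _) _)
          (Finset.mem_range.mpr hpi.1)
        calc _ ≤ F x := this
          _ = 1 := hx1
      have hS1 : (∑ l ∈ block dd dp (pIdx i), x l ^ ω l) ≤ 1 := by
        have hmne : m (pIdx i) ≠ 0 := by have := hm _ hpi.1; omega
        refine le_of_pow_le_pow_left₀ hmne zero_le_one ?_
        simpa using hSm1
      have hxi : x i ^ ω i ≤ 1 :=
        le_trans (Finset.single_le_sum (fun l _ => (hω l).1.pow_nonneg (x l)) hiblock) hS1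
      have hωne : ω i ≠ 0 := (hω i).2.ne'
      refine le_of_pow_le_pow_left₀ hωne zero_le_one ?_
      rw [(hω i).1.pow_abs]
      simpa using hxi
    have : ‖x‖ ≤ Real.sqrt dd := by
      rw [EuclideanSpace.norm_eq]
      apply Real.sqrt_le_sqrt
      calc (∑ i, ‖x i‖ ^ 2) ≤ ∑ _i : Fin dd, (1:ℝ) := by
            apply Finset.sum_le_sum
            intro i _
            have := hcoord i
            have : ‖x i‖ ≤ 1 := by rwa [Real.norm_eq_abs]
            nlinarith [norm_nonneg (x i)]
        _ = dd := by simp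
    simpa [Metric.mem_closedBall] using this
  have hKcomp : IsCompact K :=
    Metric.isCompact_of_isClosed_isBounded hKclosed
      (Metric.isBounded_closedBall.subset hKsub)
  -- The norm of the gradient equals the norm of the Fréchet derivative
  have hgradnorm : ∀ x : EuclideanSpace ℝ (Fin dd),
      ‖gradient F x‖ = ‖fderiv ℝ F x‖ := by
    intro x
    rw [gradient]
    exact LinearIsometryEquiv.norm_map _ _
  have hφcont : Continuous fun x => ‖fderiv ℝ F x‖ :=
    (hsmooth.continuous_fderiv (by simp)).norm
  rcases K.eq_empty_or_nonempty with hKe | hKne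
  · refine ⟨1, 1, one_pos, le_rfl, fun x hx => ?_⟩
    exfalso
    have hxK : x ∈ K := hx
    rw [hKe] at hxK
    exact hxK
  · obtain ⟨a, haK, hamin⟩ := hKcomp.exists_isMinOn hKne hφcont.continuousOn
    obtain ⟨b, hbK, hbmax⟩ := hKcomp.exists_isMaxOn hKne hφcont.continuousOn
    have hane : fderiv ℝ F a ≠ 0 := by
      intro h0
      have := key a haK
      rw [h0] at this
      simp at this
      linarith
    refine ⟨‖fderiv ℝ F a‖, ‖fderiv ℝ F b‖, norm_pos_iff.mpr hane,
      isMinOn_iff.mp hamin b hbK, fun x hx => ?_⟩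
    have hxK : x ∈ K := hx
    rw [hgradnorm]
    exact ⟨isMinOn_iff.mp hamin x hxK, isMaxOn_iff.mp hbmax x hxK⟩
end
end
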